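/- arXiv:1603.01296 — 4 statements merged into one kernel-verified Lean document; each statement's English description precedes it below -/
import Mathlib

section
/- Let H₁ = 1 + 2·M₂(ℤ₂), H₂ = 1 + 4·M₂(ℤ₂), H₃ = 1 + 8·M₂(ℤ₂) be congruence subgroups of GL₂(ℤ₂), and let 𝓗 be the subgroup of H₁ generated by the squares {h² : h ∈ H₁}. Then 𝓗 = {g ∈ H₂ : det g ≡ 1 mod 8}, and moreover [H₂ : 𝓗] = 2 and [H₁ : 𝓗] = 2⁵. -/
open Matrix

/-- The principal congruence subgroup `1 + 2ᵏ·M₂(ℤ₂)` of `GL₂(ℤ₂)`, i.e. the kernel of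
reduction modulo `2ᵏ`. -/
noncomputable def congSubgroup (k : ℕ) : Subgroup (GL (Fin 2) ℤ_[2]) :=
  MonoidHom.ker (Matrix.GeneralLinearGroup.map
    (Ideal.Quotient.mk (Ideal.span {(2 : ℤ_[2]) ^ k})))

/-- The subgroup `𝓗` of `H₁ = 1 + 2·M₂(ℤ₂)` generated by the squares of elements of `H₁`. -/
noncomputable def scrH : Subgroup (GL (Fin 2) ℤ_[2]) :=
  Subgroup.closure {g : GL (Fin 2) ℤ_[2] | ∃ h ∈ congSubgroup 1, g = h ^ 2}

/-!
A square `(1 + 2A)² = 1 + 4(A + A²)` of an element of `H₁` lies in `H₂` and has determinant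
`(1 + 2w)² ≡ 1 mod 8`, so `𝓗 ⊆ S := {g ∈ H₂ : det g ≡ 1 mod 8}`. Conversely, `g = 1 + 4B ∈ S`
forces `tr B` to be even; if `det B` is even as well, Cayley–Hamilton and Hensel's lemma produce
a square root `1 + 2A` of `g`, and otherwise `g h₀²` is of that kind for
`h₀ = 1 + 2·[[1, 1], [1, 0]]`.
The indices come from two homomorphisms: the determinant mod 8 maps `H₂` onto `{1, 5}` with
kernel `S`, and `1 + 2ᵏA ↦ A mod 2` maps `Hₖ` (`k ≥ 1`) onto `M₂(𝔽₂)` with kernel `Hₖ₊₁`.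
-/

local notation "M₂" => Matrix (Fin 2) (Fin 2) ℤ_[2]

namespace PadicInt

theorem two_dvd_iff_toZMod_eq_zero (x : ℤ_[2]) : (2 : ℤ_[2]) ∣ x ↔ toZMod x = 0 := by
  rw [← RingHom.mem_ker, ker_toZMod, maximalIdeal_eq_span_p, Ideal.mem_span_singleton,
    Nat.cast_ofNat]

theorem two_dvd_sq_sub_self (x : ℤ_[2]) : (2 : ℤ_[2]) ∣ x ^ 2 - x := by
  rw [two_dvd_iff_toZMod_eq_zero, map_sub, map_pow]
  generalize toZMod x = y
  revert y
  decide

theorem isUnit_one_add_two_mul (x : ℤ_[2]) : IsUnit (1 + 2 * x) := by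
  have h : -(2 * x) ∈ nonunits ℤ_[2] :=
    mem_nonunits.2 ((norm_lt_one_iff_dvd _).2 ⟨-x, by push_cast; ring⟩)
  simpa using IsLocalRing.isUnit_one_sub_self_of_mem_nonunits _ h

open Polynomial in
theorem exists_sq_add_mul_one_add_two_mul_eq (τ δ : ℤ_[2]) :
    ∃ z : ℤ_[2], (z * (1 + 2 * z) - τ) ^ 2 + (z * (1 + 2 * z) - τ) * (1 + 2 * z) = 2 * δ := by
  set F : ℤ_[2][X] :=
    (X * (1 + 2 * X) - C τ) ^ 2 + (X * (1 + 2 * X) - C τ) * (1 + 2 * X) - C (2 * δ)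
  have hF (z : ℤ_[2]) : F.aeval z =
      (z * (1 + 2 * z) - τ) ^ 2 + (z * (1 + 2 * z) - τ) * (1 + 2 * z) - 2 * δ := by
    simp [F]
  have hF' : F.derivative.aeval (0 : ℤ_[2]) = 1 + 2 * (-(2 * τ)) := by
    simp [F, derivative_pow, derivative_mul]; ring
  have hnorm : ‖F.aeval (0 : ℤ_[2])‖ < ‖F.derivative.aeval (0 : ℤ_[2])‖ ^ 2 := by
    rw [hF', isUnit_iff.1 (isUnit_one_add_two_mul _), one_pow, norm_lt_one_iff_dvd, hF,
      Nat.cast_ofNat]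
    obtain ⟨t, ht⟩ := two_dvd_sq_sub_self τ
    exact ⟨t - δ, by linear_combination ht⟩
  obtain ⟨z, hz, -⟩ := hensels_lemma hnorm
  exact ⟨z, by rw [← sub_eq_zero, ← hF, hz]⟩

end PadicInt

theorem Matrix.det_one_add_smul_fin_two {R : Type*} [CommRing R] (c : R)
    (A : Matrix (Fin 2) (Fin 2) R) : (1 + c • A).det = 1 + c * A.trace + c ^ 2 * A.det := by
  simp only [det_fin_two, trace_fin_two, add_apply, smul_apply, smul_eq_mul, one_apply_eq,
    one_apply_ne zero_ne_one, one_apply_ne one_ne_zero]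
  ring

theorem Matrix.one_add_two_smul_sq {R n : Type*} [CommRing R] [Fintype n] [DecidableEq n]
    (A : Matrix n n R) : (1 + (2 : R) • A) ^ 2 = 1 + (4 : R) • (A + A ^ 2) := by
  rw [sq, sq, add_mul, mul_add, mul_add, smul_mul_smul_comm, mul_smul_comm, smul_mul_assoc]
  simp only [one_mul, mul_one, smul_add]
  norm_num
  module

/- With `tr B = 2τ`, the ansatz `A = u⁻¹ • (B + d)`, `u = 1 + 2z`, `d = z u - τ` turns `A + A² = B`,
via Cayley–Hamilton, into the scalar equation solved by Hensel's lemma above. -/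
open PadicInt in
theorem exists_one_add_two_smul_sq_eq {B : M₂} (htr : 2 ∣ B.trace) (hdet : 2 ∣ B.det) :
    ∃ A : M₂, (1 + (2 : ℤ_[2]) • A) ^ 2 = 1 + (4 : ℤ_[2]) • B := by
  obtain ⟨τ, hτ⟩ := htr
  obtain ⟨δ, hδ⟩ := hdet
  rw [trace_fin_two] at hτ
  rw [det_fin_two] at hδ
  obtain ⟨z, hz⟩ := exists_sq_add_mul_one_add_two_mul_eq τ δ
  obtain ⟨c, hc⟩ := (isUnit_one_add_two_mul z).exists_left_inv
  set u := 1 + 2 * z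
  set d := z * u - τ
  refine ⟨c • (B + d • 1), ?_⟩
  rw [one_add_two_smul_sq]
  congr 2
  ext i j
  fin_cases i <;> fin_cases j <;>
    simp only [sq, Matrix.add_apply, Matrix.smul_apply, Matrix.mul_apply, Fin.sum_univ_two,
      smul_eq_mul, one_apply_eq, one_apply_ne zero_ne_one, one_apply_ne one_ne_zero, Fin.zero_eta,
      Fin.mk_one, Fin.isValue]
  · linear_combination c ^ 2 * B 0 0 * hτ - c ^ 2 * hδ + c ^ 2 * hz
      - (c * (B 0 0 + d) - (1 + c * u) * B 0 0) * hc
  · linear_combination c ^ 2 * B 0 1 * hτ - (c * B 0 1 - (1 + c * u) * B 0 1) * hc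
  · linear_combination c ^ 2 * B 1 0 * hτ - (c * B 1 0 - (1 + c * u) * B 1 0) * hc
  · linear_combination c ^ 2 * B 1 1 * hτ - c ^ 2 * hδ + c ^ 2 * hz
      - (c * (B 1 1 + d) - (1 + c * u) * B 1 1) * hc

theorem mem_congSubgroup_iff_dvd {k : ℕ} {g : GL (Fin 2) ℤ_[2]} :
    g ∈ congSubgroup k ↔ ∀ i j, (2 : ℤ_[2]) ^ k ∣ (g : M₂) i j - (1 : M₂) i j := by
  simp only [congSubgroup, MonoidHom.mem_ker, Units.ext_iff, ← Matrix.ext_iff]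
  refine forall₂_congr fun i j => ?_
  rw [← Ideal.mem_span_singleton, ← Ideal.Quotient.eq]
  by_cases hij : i = j <;> simp [one_apply, hij]

theorem mem_congSubgroup_iff {k : ℕ} {g : GL (Fin 2) ℤ_[2]} :
    g ∈ congSubgroup k ↔ ∃ A : M₂, (g : M₂) = 1 + (2 : ℤ_[2]) ^ k • A := by
  rw [mem_congSubgroup_iff_dvd]
  constructor
  · intro h
    choose A hA using h
    exact ⟨Matrix.of A, by ext i j; simp [← hA]⟩
  · rintro ⟨A, hA⟩ i j
    exact ⟨A i j, by simp [hA]⟩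

theorem congSubgroup_antitone : Antitone congSubgroup := fun _ _ hjk _ hg =>
  mem_congSubgroup_iff_dvd.2 fun i j =>
    (pow_dvd_pow 2 hjk).trans (mem_congSubgroup_iff_dvd.1 hg i j)

noncomputable def congOffset {k : ℕ} (g : congSubgroup k) : M₂ :=
  (mem_congSubgroup_iff.1 g.2).choose

theorem val_eq_one_add_congOffset {k : ℕ} (g : congSubgroup k) :
    ((g : GL (Fin 2) ℤ_[2]) : M₂) = 1 + (2 : ℤ_[2]) ^ k • congOffset g :=
  (mem_congSubgroup_iff.1 g.2).choose_spec

theorem congOffset_eq {k : ℕ} {g : congSubgroup k} {A : M₂}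
    (hA : ((g : GL (Fin 2) ℤ_[2]) : M₂) = 1 + (2 : ℤ_[2]) ^ k • A) : congOffset g = A :=
  smul_right_injective M₂ (pow_ne_zero k two_ne_zero)
    (add_left_cancel ((val_eq_one_add_congOffset g).symm.trans hA))

theorem isUnit_one_add_two_pow_smul {k : ℕ} (hk : k ≠ 0) (A : M₂) :
    IsUnit (1 + (2 : ℤ_[2]) ^ k • A) := by
  obtain ⟨j, rfl⟩ := Nat.exists_eq_add_one_of_ne_zero hk
  rw [isUnit_iff_isUnit_det, det_one_add_smul_fin_two]
  convert PadicInt.isUnit_one_add_two_mul (2 ^ j * (A.trace + 2 ^ (j + 1) * A.det)) using 1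
  ring

noncomputable def oneAddTwoPowSMul {k : ℕ} (hk : k ≠ 0) (A : M₂) : GL (Fin 2) ℤ_[2] :=
  (isUnit_one_add_two_pow_smul hk A).unit

theorem val_oneAddTwoPowSMul {k : ℕ} (hk : k ≠ 0) (A : M₂) :
    (oneAddTwoPowSMul hk A : M₂) = 1 + (2 : ℤ_[2]) ^ k • A :=
  IsUnit.unit_spec _

theorem oneAddTwoPowSMul_mem {k : ℕ} (hk : k ≠ 0) (A : M₂) :
    oneAddTwoPowSMul hk A ∈ congSubgroup k :=
  mem_congSubgroup_iff.2 ⟨A, val_oneAddTwoPowSMul hk A⟩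

theorem congOffset_oneAddTwoPowSMul {k : ℕ} (hk : k ≠ 0) (A : M₂) :
    congOffset ⟨oneAddTwoPowSMul hk A, oneAddTwoPowSMul_mem hk A⟩ = A :=
  congOffset_eq (val_oneAddTwoPowSMul hk A)

noncomputable def congReduction (k : ℕ) (hk : k ≠ 0) :
    congSubgroup k →* Multiplicative (Matrix (Fin 2) (Fin 2) (ZMod 2)) where
  toFun g := .ofAdd ((congOffset g).map PadicInt.toZMod)
  map_one' := by
    rw [congOffset_eq (A := 0) (by simp)]
    simp
  map_mul' a b := by
    have hab : congOffset (a * b) =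
        congOffset a + congOffset b + (2 : ℤ_[2]) ^ k • (congOffset a * congOffset b) := by
      apply congOffset_eq
      rw [Subgroup.coe_mul, Units.val_mul, val_eq_one_add_congOffset, val_eq_one_add_congOffset]
      simp only [add_mul, mul_add, one_mul, mul_one, mul_smul_comm, smul_mul_assoc]
      module
    have h2 : PadicInt.toZMod ((2 : ℤ_[2]) ^ k) = 0 := by
      rw [← PadicInt.two_dvd_iff_toZMod_eq_zero]
      exact dvd_pow_self 2 hk
    rw [hab]
    ext i j
    simp [h2]

theorem congReduction_apply {k : ℕ} (hk : k ≠ 0) (g : congSubgroup k) :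
    congReduction k hk g = .ofAdd ((congOffset g).map PadicInt.toZMod) := rfl

theorem ker_congReduction {k : ℕ} (hk : k ≠ 0) :
    (congReduction k hk).ker = (congSubgroup (k + 1)).subgroupOf (congSubgroup k) := by
  ext g
  rw [MonoidHom.mem_ker, Subgroup.mem_subgroupOf, mem_congSubgroup_iff_dvd, congReduction_apply,
    ← ofAdd_zero, EmbeddingLike.apply_eq_iff_eq, ← Matrix.ext_iff]
  refine forall₂_congr fun i j => ?_
  rw [val_eq_one_add_congOffset, Matrix.add_apply, add_sub_cancel_left, Matrix.smul_apply,
    smul_eq_mul, pow_succ, mul_dvd_mul_iff_left (pow_ne_zero k two_ne_zero),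
    PadicInt.two_dvd_iff_toZMod_eq_zero]
  rfl

theorem congReduction_surjective {k : ℕ} (hk : k ≠ 0) :
    Function.Surjective (congReduction k hk) := by
  intro m
  refine ⟨⟨_, oneAddTwoPowSMul_mem hk ((m.toAdd).map fun x => (x.val : ℤ_[2]))⟩, ?_⟩
  rw [congReduction_apply, congOffset_oneAddTwoPowSMul]
  ext i j
  simp

theorem relIndex_congSubgroup_succ {k : ℕ} (hk : k ≠ 0) :
    (congSubgroup (k + 1)).relIndex (congSubgroup k) = 16 := by
  rw [Subgroup.relIndex, ← ker_congReduction hk, Subgroup.index_ker,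
    MonoidHom.range_eq_top.2 (congReduction_surjective hk), Subgroup.card_top]
  simp [Nat.card_eq_fintype_card, Matrix]

noncomputable def detModEight : GL (Fin 2) ℤ_[2] →* (ZMod (2 ^ 3))ˣ :=
  (Units.map (PadicInt.toZModPow 3 : ℤ_[2] →+* ZMod (2 ^ 3)).toMonoidHom).comp
    GeneralLinearGroup.det

theorem val_detModEight (g : GL (Fin 2) ℤ_[2]) :
    (detModEight g : ZMod (2 ^ 3)) = PadicInt.toZModPow 3 (g : M₂).det := rfl

theorem mem_ker_detModEight_iff {g : GL (Fin 2) ℤ_[2]} :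
    g ∈ detModEight.ker ↔ ∃ u : ℤ_[2], (g : M₂).det = 1 + 8 * u := by
  rw [MonoidHom.mem_ker, Units.ext_iff, val_detModEight, Units.val_one, ← sub_eq_zero,
    ← map_one (PadicInt.toZModPow 3), ← map_sub, ← RingHom.mem_ker, PadicInt.ker_toZModPow,
    Ideal.mem_span_singleton]
  norm_num [dvd_def, sub_eq_iff_eq_add']

theorem sq_mem_of_mem_congSubgroup_one {h : GL (Fin 2) ℤ_[2]} (hh : h ∈ congSubgroup 1) :
    h ^ 2 ∈ congSubgroup 2 ⊓ detModEight.ker := by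
  set A := congOffset ⟨h, hh⟩
  have hA : (h : M₂) = 1 + (2 : ℤ_[2]) • A := by simpa using val_eq_one_add_congOffset ⟨h, hh⟩
  have hsq : ((h ^ 2 : GL (Fin 2) ℤ_[2]) : M₂) = 1 + (2 : ℤ_[2]) ^ 2 • (A + A ^ 2) := by
    rw [Units.val_pow_eq_pow_val, hA, one_add_two_smul_sq]
    norm_num
  refine ⟨mem_congSubgroup_iff.2 ⟨_, hsq⟩, mem_ker_detModEight_iff.2 ?_⟩
  obtain ⟨t, ht⟩ := PadicInt.two_dvd_sq_sub_self (A.trace + 2 * A.det)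
  refine ⟨t + A.trace + 2 * A.det, ?_⟩
  rw [Units.val_pow_eq_pow_val, det_pow, hA, det_one_add_smul_fin_two]
  linear_combination 4 * ht

theorem two_dvd_trace_of_mem_ker_detModEight {g : GL (Fin 2) ℤ_[2]} {B : M₂}
    (hg : (g : M₂) = 1 + (4 : ℤ_[2]) • B) (h8 : g ∈ detModEight.ker) : 2 ∣ B.trace := by
  obtain ⟨u, hu⟩ := mem_ker_detModEight_iff.1 h8
  rw [hg, det_one_add_smul_fin_two] at hu
  refine ⟨u - 2 * B.det, mul_left_cancel₀ (by norm_num : (4 : ℤ_[2]) ≠ 0) ?_⟩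
  linear_combination hu

theorem mem_scrH_of_eq_one_add_four_smul {g : GL (Fin 2) ℤ_[2]} {B : M₂}
    (hg : (g : M₂) = 1 + (4 : ℤ_[2]) • B) (htr : 2 ∣ B.trace) (hdet : 2 ∣ B.det) : g ∈ scrH := by
  obtain ⟨A, hA⟩ := exists_one_add_two_smul_sq_eq htr hdet
  refine Subgroup.subset_closure ⟨_, oneAddTwoPowSMul_mem one_ne_zero A, Units.ext ?_⟩
  rw [Units.val_pow_eq_pow_val, val_oneAddTwoPowSMul, pow_one, hA, hg]

theorem two_dvd_det_add_one_add_two_smul {B : M₂} (htr : 2 ∣ B.trace) (hdet : ¬ 2 ∣ B.det)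
    (E : M₂) : 2 ∣ (B + 1 + (2 : ℤ_[2]) • E).det := by
  have h2 : PadicInt.toZMod (2 : ℤ_[2]) = 0 := by
    rw [← PadicInt.two_dvd_iff_toZMod_eq_zero]
  rw [PadicInt.two_dvd_iff_toZMod_eq_zero] at htr hdet ⊢
  have hmap : PadicInt.toZMod.mapMatrix (B + 1 + (2 : ℤ_[2]) • E) =
      1 + (1 : ZMod 2) • PadicInt.toZMod.mapMatrix B := by
    ext i j
    by_cases hij : i = j <;> simp [h2, hij, add_comm]
  rw [RingHom.map_det, hmap, det_one_add_smul_fin_two, ← RingHom.map_det, RingHom.mapMatrix_apply,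
    ← AddMonoidHom.map_trace, htr]
  generalize PadicInt.toZMod B.det = x at hdet
  revert x
  decide

theorem le_scrH : congSubgroup 2 ⊓ detModEight.ker ≤ scrH := by
  rintro g ⟨hg2, hg8⟩
  set B := congOffset ⟨g, hg2⟩
  have hB : (g : M₂) = 1 + (4 : ℤ_[2]) • B := by
    simpa [show (2 : ℤ_[2]) ^ 2 = 4 by norm_num] using val_eq_one_add_congOffset ⟨g, hg2⟩
  have htr := two_dvd_trace_of_mem_ker_detModEight hB hg8
  by_cases hdet : 2 ∣ B.det
  · exact mem_scrH_of_eq_one_add_four_smul hB htr hdet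
  -- `A₀² = A₀ + 1`, so `h₀² = 1 + 4 (1 + 2 A₀)`: multiplying by it flips the parity of `det B`
  set A₀ : M₂ := !![1, 1; 1, 0]
  set h₀ := oneAddTwoPowSMul one_ne_zero A₀
  have hh₀ : h₀ ∈ congSubgroup 1 := oneAddTwoPowSMul_mem _ _
  have hsq : ((h₀ ^ 2 : GL (Fin 2) ℤ_[2]) : M₂) = 1 + (4 : ℤ_[2]) • (1 + (2 : ℤ_[2]) • A₀) := by
    rw [Units.val_pow_eq_pow_val, val_oneAddTwoPowSMul, pow_one, one_add_two_smul_sq]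
    congr 2
    rw [one_fin_two]
    norm_num [A₀, sq]
  set E := A₀ + (2 : ℤ_[2]) • (B * (1 + (2 : ℤ_[2]) • A₀))
  have hg' : ((g * h₀ ^ 2 : GL (Fin 2) ℤ_[2]) : M₂) =
      1 + (4 : ℤ_[2]) • (B + 1 + (2 : ℤ_[2]) • E) := by
    rw [Units.val_mul, hB, hsq]
    simp only [E, add_mul, mul_add, one_mul, mul_one, mul_smul_comm, smul_mul_assoc]
    module
  have h8' : g * h₀ ^ 2 ∈ detModEight.ker := mul_mem hg8 (sq_mem_of_mem_congSubgroup_one hh₀).2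
  have hmem := mem_scrH_of_eq_one_add_four_smul hg' (two_dvd_trace_of_mem_ker_detModEight hg' h8')
    (two_dvd_det_add_one_add_two_smul htr hdet E)
  have hsq_mem : h₀ ^ 2 ∈ scrH := Subgroup.subset_closure ⟨h₀, hh₀, rfl⟩
  exact (Subgroup.mul_mem_cancel_right _ hsq_mem).1 hmem

theorem scrH_le : scrH ≤ congSubgroup 2 ⊓ detModEight.ker := by
  rw [scrH, Subgroup.closure_le]
  rintro _ ⟨h, hh, rfl⟩
  exact sq_mem_of_mem_congSubgroup_one hh

theorem scrH_eq : scrH = congSubgroup 2 ⊓ detModEight.ker :=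
  le_antisymm scrH_le le_scrH

theorem val_detModEight_eq_one_or_five {g : GL (Fin 2) ℤ_[2]} (hg : g ∈ congSubgroup 2) :
    (detModEight g : ZMod (2 ^ 3)) = 1 ∨ (detModEight g : ZMod (2 ^ 3)) = 5 := by
  obtain ⟨B, hB⟩ := mem_congSubgroup_iff.1 hg
  rw [val_detModEight, hB, det_one_add_smul_fin_two]
  simp only [map_add, map_mul, map_pow, map_one, map_ofNat]
  generalize PadicInt.toZModPow 3 B.trace = x
  generalize PadicInt.toZModPow 3 B.det = y
  revert x y
  decide

theorem relIndex_ker_detModEight : detModEight.ker.relIndex (congSubgroup 2) = 2 := by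
  set e := oneAddTwoPowSMul two_ne_zero !![(1 : ℤ_[2]), 0; 0, 0]
  have he : (detModEight e : ZMod (2 ^ 3)) = 5 := by
    rw [val_detModEight, val_oneAddTwoPowSMul, det_one_add_smul_fin_two]
    norm_num [trace_fin_two, det_fin_two, map_ofNat]
  have hmap :
      ((congSubgroup 2).map detModEight : Set (ZMod (2 ^ 3))ˣ) = {1, detModEight e} := by
    ext u
    constructor
    · rintro ⟨g, hg, rfl⟩
      rcases val_detModEight_eq_one_or_five hg with h | h
      · exact .inl (Units.ext h)
      · exact .inr (Units.ext (h.trans he.symm))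
    · rintro (rfl | rfl)
      · exact one_mem _
      · exact ⟨e, oneAddTwoPowSMul_mem _ _, rfl⟩
  rw [Subgroup.relIndex, ← MonoidHom.ker_domRestrict, Subgroup.index_ker,
    MonoidHom.domRestrict_range, ← SetLike.coe_sort_coe, hmap, Nat.card_coe_set_eq, Set.ncard_pair]
  intro h
  have := congrArg Units.val h
  rw [he] at this
  exact absurd this (by decide)

/-- With `H₁ = 1 + 2·M₂(ℤ₂)`, `H₂ = 1 + 4·M₂(ℤ₂)`, and `𝓗` the subgroup of `H₁` generated by
squares, one has `𝓗 = {g ∈ H₂ : det g ≡ 1 mod 8}`, `[H₂ : 𝓗] = 2` and `[H₁ : 𝓗] = 2⁵`. -/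
theorem scrH_eq_det_one_mod_eight :
    (scrH : Set (GL (Fin 2) ℤ_[2])) =
      {g : GL (Fin 2) ℤ_[2] | g ∈ congSubgroup 2 ∧
        ∃ u : ℤ_[2], Matrix.det (g : Matrix (Fin 2) (Fin 2) ℤ_[2]) = 1 + 8 * u} ∧
    scrH.relIndex (congSubgroup 2) = 2 ∧ scrH.relIndex (congSubgroup 1) = 2 ^ 5 := by
  have hH₂ : scrH.relIndex (congSubgroup 2) = 2 := by
    rw [scrH_eq, Subgroup.inf_relIndex_left, relIndex_ker_detModEight]
  refine ⟨?_, hH₂, ?_⟩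
  · ext g
    rw [scrH_eq, Subgroup.coe_inf, Set.mem_inter_iff, SetLike.mem_coe, SetLike.mem_coe,
      mem_ker_detModEight_iff]
    rfl
  · rw [← Subgroup.relIndex_mul_relIndex _ _ _ (scrH_le.trans inf_le_left)
      (congSubgroup_antitone one_le_two), hH₂, relIndex_congSubgroup_succ one_ne_zero]
    rfl
end

section
/- Let n ≥ 1 and let q ∈ ℚ₂^× with ord₂(q) ≥ 1 odd. Then ℚ₂^× / ⟨(ℚ₂^×)^{2ⁿ}, q⟩ is isomorphic to ℤ/2ℤ × ℤ/2ⁿℤ, generated by the classes of −1 and 5. -/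
/-!
Write `x = 2 ^ v(x) * ε(x)` with `ε(x) ∈ ℤ₂ˣ`. As `v(q)` is odd there is `w` with
`w * v(q) ≡ 1 mod 2ⁿ`; send `x` to `ε(x * q ^ (-w v(x)))` modulo `2 ^ (n + 2)`. This gives a
surjection `ℚ₂ˣ → (ℤ/2^(n+2))ˣ` that kills `q` and, because `(ℤ/2^(n+2))ˣ` has exponent `2ⁿ`
for `n ≥ 1`, all `2ⁿ`-th powers. Conversely an element of the kernel, once twisted by a power
of `q`, has valuation divisible by `2ⁿ` and unit part `≡ 1 mod 2^(n+2)`, and such a unit is a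
`2ⁿ`-th power by `n` applications of Hensel's lemma to square roots. Finally
`(ℤ/2^(n+2))ˣ = ⟨-1⟩ × ⟨5⟩ ≅ ℤ/2 × ℤ/2ⁿ`: `5` has order `2ⁿ`, and `-1 ∉ ⟨5⟩` modulo `4`.
-/

open Subgroup

section ZModProd

variable {G : Type*} [CommGroup G] {a b : G} {k l : ℕ}

noncomputable def zmodPowHom (ha : a ^ k = 1) : Multiplicative (ZMod k) →* G :=
  AddMonoidHom.toMultiplicativeLeft <| ZMod.lift k
    ⟨zmultiplesHom (Additive G) (Additive.ofMul a), by
      rw [zmultiplesHom_apply, natCast_zsmul, ← ofMul_pow, ha, ofMul_one]⟩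

theorem zmodPowHom_ofAdd_intCast (ha : a ^ k = 1) (i : ℤ) :
    zmodPowHom ha (Multiplicative.ofAdd (i : ZMod k)) = a ^ i :=
  congrArg Additive.toMul (ZMod.lift_coe k _ i)

theorem Multiplicative.zmod_intCast_induction {motive : Multiplicative (ZMod k) → Prop}
    (intCast : ∀ i : ℤ, motive (Multiplicative.ofAdd (i : ZMod k)))
    (x : Multiplicative (ZMod k)) : motive x := by
  obtain ⟨i, hi⟩ := ZMod.intCast_surjective (Multiplicative.toAdd x)
  simpa [hi] using intCast i

theorem zmodPowHom_coprod_injective (hk : orderOf a = k) (hl : orderOf b = l)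
    (hab : Disjoint (zpowers a) (zpowers b)) :
    Function.Injective ((zmodPowHom (hk ▸ pow_orderOf_eq_one a)).coprod
      (zmodPowHom (hl ▸ pow_orderOf_eq_one b))) := by
  rw [injective_iff_map_eq_one]
  rintro ⟨x, y⟩ hxy
  induction x using Multiplicative.zmod_intCast_induction with | intCast i => ?_
  induction y using Multiplicative.zmod_intCast_induction with | intCast j => ?_
  simp only [MonoidHom.coprod_apply, zmodPowHom_ofAdd_intCast] at hxy
  have hai : a ^ i = 1 := disjoint_def.mp hab (zpow_mem_zpowers a i) <| by
    rw [eq_inv_of_mul_eq_one_left hxy]; exact inv_mem (zpow_mem_zpowers b j)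
  have hbj : b ^ j = 1 := by rwa [hai, one_mul] at hxy
  rw [← orderOf_dvd_iff_zpow_eq_one, hk] at hai
  rw [← orderOf_dvd_iff_zpow_eq_one, hl] at hbj
  simp [(ZMod.intCast_zmod_eq_zero_iff_dvd _ _).mpr hai,
    (ZMod.intCast_zmod_eq_zero_iff_dvd _ _).mpr hbj]

theorem zmodPowHom_coprod_bijective [Finite G] (hk : orderOf a = k) (hl : orderOf b = l)
    (hab : Disjoint (zpowers a) (zpowers b)) (hcard : Nat.card G = k * l) :
    Function.Bijective ((zmodPowHom (hk ▸ pow_orderOf_eq_one a)).coprod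
      (zmodPowHom (hl ▸ pow_orderOf_eq_one b))) := by
  have : NeZero k := ⟨hk ▸ (orderOf_pos a).ne'⟩
  have : NeZero l := ⟨hl ▸ (orderOf_pos b).ne'⟩
  refine (zmodPowHom_coprod_injective hk hl hab).bijective_of_nat_card_le ?_
  simp [hcard]

theorem closure_pair_eq_top_of_disjoint_zpowers [Finite G] (hk : orderOf a = k)
    (hl : orderOf b = l) (hab : Disjoint (zpowers a) (zpowers b)) (hcard : Nat.card G = k * l) :
    Subgroup.closure {a, b} = ⊤ := by
  refine eq_top_iff.mpr fun g _ ↦ ?_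
  obtain ⟨⟨x, y⟩, rfl⟩ := (zmodPowHom_coprod_bijective hk hl hab hcard).2 g
  induction x using Multiplicative.zmod_intCast_induction with | intCast i => ?_
  induction y using Multiplicative.zmod_intCast_induction with | intCast j => ?_
  simp only [MonoidHom.coprod_apply, zmodPowHom_ofAdd_intCast]
  exact mul_mem (zpow_mem (subset_closure (by simp)) i) (zpow_mem (subset_closure (by simp)) j)

end ZModProd

namespace ZMod

noncomputable def unitFive (n : ℕ) : (ZMod (2 ^ (n + 2)))ˣ :=
  unitOfCoprime 5 (Nat.Coprime.pow_right _ (by norm_num))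

theorem coe_unitFive (n : ℕ) : (unitFive n : ZMod (2 ^ (n + 2))) = 5 := by
  simp [unitFive]

theorem orderOf_unitFive (n : ℕ) : orderOf (unitFive n) = 2 ^ n := by
  rw [← orderOf_units, coe_unitFive, orderOf_five]

theorem orderOf_neg_one_units_two_pow (n : ℕ) : orderOf (-1 : (ZMod (2 ^ (n + 2)))ˣ) = 2 := by
  have : Fact (1 < 2 ^ (n + 2)) := ⟨Nat.one_lt_two_pow (by omega)⟩
  rw [← orderOf_units, Units.val_neg, Units.val_one, orderOf_neg_one, ringChar_zmod_n,
    if_neg (by simp [pow_succ])]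

theorem disjoint_zpowers_neg_one_unitFive (n : ℕ) :
    Disjoint (zpowers (-1 : (ZMod (2 ^ (n + 2)))ˣ)) (zpowers (unitFive n)) := by
  have h4 : 4 ∣ 2 ^ (n + 2) := Dvd.intro_left _ (pow_add 2 n 2).symm
  have hfive : unitsMap h4 (unitFive n) = 1 := by
    ext
    rw [unitsMap_val, coe_unitFive]
    exact (cast_natCast h4 5).trans (by decide)
  rw [disjoint_def]
  rintro x ⟨i, rfl⟩ ⟨j, hj⟩
  dsimp only at hj ⊢
  rcases Int.even_or_odd i with hi | hi
  · exact hi.neg_one_zpow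
  · rw [hi.neg_one_zpow] at hj
    have := congrArg Units.val (congrArg (unitsMap h4) hj)
    rw [map_zpow, hfive, one_zpow] at this
    simp only [unitsMap_val, Units.val_neg, Units.val_one, cast_neg h4, cast_one h4] at this
    exact absurd this (by decide)

theorem card_units_two_pow (n : ℕ) : Nat.card (ZMod (2 ^ (n + 2)))ˣ = 2 * 2 ^ n := by
  rw [Nat.card_eq_fintype_card, card_units_eq_totient,
    Nat.totient_prime_pow Nat.prime_two (by omega), show n + 2 - 1 = n + 1 by omega]
  ring

noncomputable def unitsTwoPowEquiv (n : ℕ) :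
    Multiplicative (ZMod 2) × Multiplicative (ZMod (2 ^ n)) ≃* (ZMod (2 ^ (n + 2)))ˣ :=
  MulEquiv.ofBijective _ <| zmodPowHom_coprod_bijective (orderOf_neg_one_units_two_pow n)
    (orderOf_unitFive n) (disjoint_zpowers_neg_one_unitFive n) (card_units_two_pow n)

theorem closure_neg_one_unitFive (n : ℕ) :
    Subgroup.closure {(-1 : (ZMod (2 ^ (n + 2)))ˣ), unitFive n} = ⊤ :=
  closure_pair_eq_top_of_disjoint_zpowers (orderOf_neg_one_units_two_pow n)
    (orderOf_unitFive n) (disjoint_zpowers_neg_one_unitFive n) (card_units_two_pow n)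

theorem pow_two_pow_eq_one_of_units {n : ℕ} (hn : 1 ≤ n) (x : (ZMod (2 ^ (n + 2)))ˣ) :
    x ^ 2 ^ n = 1 := by
  simpa [ArithmeticFunction.carmichael_two_pow_of_ne_two (n := n + 2) (by omega)] using
    ArithmeticFunction.pow_carmichael x

end ZMod

namespace PadicInt

theorem norm_two : ‖(2 : ℤ_[2])‖ = 1 / 2 := by
  simpa using norm_p (p := 2)

theorem exists_sq_eq_of_norm_sub_one_lt {z : ℤ_[2]} (hz : ‖z - 1‖ < 1 / 4) :
    ∃ c : ℤ_[2], c ^ 2 = z ∧ ‖c - 1‖ = 2 * ‖z - 1‖ := by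
  let F : Polynomial ℤ_[2] := .X ^ 2 - .C z
  have hF1 : F.aeval (1 : ℤ_[2]) = 1 - z := by simp [F]
  have hF'1 : F.derivative.aeval (1 : ℤ_[2]) = 2 := by simp [F, one_add_one_eq_two]
  have hF : ‖F.aeval (1 : ℤ_[2])‖ < ‖F.derivative.aeval (1 : ℤ_[2])‖ ^ 2 := by
    rw [hF1, hF'1, norm_sub_rev, norm_two]
    linarith
  obtain ⟨c, hc, hc1, -⟩ := hensels_lemma hF
  rw [hF'1, norm_two] at hc1
  have hcz : c ^ 2 = z := by simpa [F, sub_eq_zero] using hc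
  have hc2 : ‖c + 1‖ = 1 / 2 := by
    rw [show c + 1 = (c - 1) + 2 by ring, norm_add_eq_max_of_ne (by rw [norm_two]; exact hc1.ne),
      norm_two, max_eq_right hc1.le]
  refine ⟨c, hcz, ?_⟩
  have : ‖z - 1‖ = ‖c - 1‖ * ‖c + 1‖ := by rw [← norm_mul, ← hcz]; ring_nf
  rw [this, hc2]
  ring

theorem exists_pow_two_pow_eq_of_norm_sub_one_le (n : ℕ) {z : ℤ_[2]}
    (hz : ‖z - 1‖ ≤ (1 / 2) ^ (n + 2)) : ∃ c : ℤ_[2], c ^ 2 ^ n = z := by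
  induction n generalizing z with
  | zero => exact ⟨z, pow_one z⟩
  | succ n ih =>
    have hz4 : ‖z - 1‖ < 1 / 4 := hz.trans_lt <| by
      calc ((1 : ℝ) / 2) ^ (n + 1 + 2) ≤ (1 / 2) ^ 3 :=
            pow_le_pow_of_le_one (by norm_num) (by norm_num) (by omega)
        _ < 1 / 4 := by norm_num
    obtain ⟨c, rfl, hc⟩ := exists_sq_eq_of_norm_sub_one_lt hz4
    have : ((1 : ℝ) / 2) ^ (n + 1 + 2) = (1 / 2) ^ (n + 2) / 2 := by ring
    obtain ⟨d, rfl⟩ := ih (z := c) (by rw [hc]; linarith)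
    exact ⟨d, by rw [pow_succ, pow_mul]⟩

theorem exists_pow_two_pow_eq_of_toZModPow_eq_one {n : ℕ} {z : ℤ_[2]ˣ}
    (hz : toZModPow (n + 2) (z : ℤ_[2]) = 1) : ∃ c : ℤ_[2]ˣ, c ^ 2 ^ n = z := by
  have hmem : (z : ℤ_[2]) - 1 ∈ Ideal.span {((2 : ℕ) : ℤ_[2]) ^ (n + 2)} := by
    rw [← ker_toZModPow, RingHom.mem_ker, map_sub, hz, map_one, sub_self]
  have hnorm := (norm_le_pow_iff_mem_span_pow _ _).mpr hmem
  rw [zpow_neg, zpow_natCast, ← inv_pow, Nat.cast_ofNat, inv_eq_one_div] at hnorm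
  obtain ⟨c, hc⟩ := exists_pow_two_pow_eq_of_norm_sub_one_le n hnorm
  have hcu : IsUnit c := (isUnit_pow_iff (pow_ne_zero n two_ne_zero)).mp (hc ▸ z.isUnit)
  exact ⟨hcu.unit, Units.ext hc⟩

theorem unitsMap_toZModPow_surjective {p : ℕ} [Fact p.Prime] (k : ℕ) :
    Function.Surjective (Units.map (toZModPow k : ℤ_[p] →+* ZMod (p ^ k)).toMonoidHom) := by
  rcases k with _ | k
  · have : Subsingleton (ZMod (p ^ 0)) := by rw [pow_zero]; infer_instance
    exact fun y ↦ ⟨1, Subsingleton.elim _ _⟩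
  · have : Fact (1 < p ^ (k + 1)) :=
      ⟨Nat.one_lt_pow k.succ_ne_zero (Fact.out : p.Prime).one_lt⟩
    exact IsLocalRing.surjective_units_map_of_local_ringHom _ (ZMod.ringHom_surjective _)
      (.of_surjective _ (ZMod.ringHom_surjective _))

end PadicInt

namespace Padic

variable {p : ℕ} [Fact p.Prime]

theorem valuation_units_mul (x y : ℚ_[p]ˣ) :
    ((x * y : ℚ_[p]ˣ) : ℚ_[p]).valuation = (x : ℚ_[p]).valuation + (y : ℚ_[p]).valuation :=
  valuation_mul x.ne_zero y.ne_zero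

theorem valuation_units_zpow (x : ℚ_[p]ˣ) (k : ℤ) :
    ((x ^ k : ℚ_[p]ˣ) : ℚ_[p]).valuation = k * (x : ℚ_[p]).valuation := by
  rw [Units.val_zpow_eq_zpow_val, valuation_zpow]

theorem norm_mul_zpow_neg_valuation {x : ℚ_[p]} (hx : x ≠ 0) :
    ‖x * (p : ℚ_[p]) ^ (-x.valuation)‖ = 1 := by
  have hp : (p : ℝ) ≠ 0 := NeZero.ne _
  rw [norm_mul, norm_zpow, norm_eq_zpow_neg_valuation hx, norm_p, inv_zpow', neg_neg,
    ← zpow_add₀ hp, neg_add_cancel, zpow_zero]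

noncomputable def unitPart : ℚ_[p]ˣ →* ℤ_[p]ˣ where
  toFun x := PadicInt.mkUnits (norm_mul_zpow_neg_valuation x.ne_zero)
  map_one' := Units.ext <| PadicInt.ext <| by simp
  map_mul' x y := Units.ext <| PadicInt.ext <| by
    simp only [Units.val_mul, PadicInt.coe_mul, PadicInt.mkUnits_eq]
    rw [valuation_mul x.ne_zero y.ne_zero, neg_add, zpow_add₀ (NeZero.ne _)]
    ring

theorem coe_unitPart (x : ℚ_[p]ˣ) :
    ((unitPart x : ℤ_[p]) : ℚ_[p]) = x * (p : ℚ_[p]) ^ (-(x : ℚ_[p]).valuation) := rfl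

theorem eq_pow_valuation_mul_unitPart (x : ℚ_[p]ˣ) :
    (x : ℚ_[p]) = (p : ℚ_[p]) ^ (x : ℚ_[p]).valuation * (unitPart x : ℤ_[p]) := by
  rw [coe_unitPart, mul_left_comm, ← zpow_add₀ (NeZero.ne _), add_neg_cancel, zpow_zero,
    mul_one]

theorem valuation_coe_units (z : ℤ_[p]ˣ) : ((z : ℤ_[p]) : ℚ_[p]).valuation = 0 := by
  have h := PadicInt.norm_eq_zpow_neg_valuation z.ne_zero
  rw [PadicInt.norm_units, eq_comm, zpow_eq_one_iff_right₀ (Nat.cast_nonneg _)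
    (by exact_mod_cast (Fact.out : p.Prime).ne_one)] at h
  rw [PadicInt.valuation_coe]
  omega

noncomputable def twist (q : ℚ_[p]ˣ) (w : ℤ) : ℚ_[p]ˣ →* ℚ_[p]ˣ :=
  MonoidHom.mk' (fun x ↦ x * q ^ (-(w * (x : ℚ_[p]).valuation))) fun x y ↦ by
    rw [valuation_units_mul, mul_add, neg_add, zpow_add, mul_mul_mul_comm]

theorem twist_apply (q : ℚ_[p]ˣ) (w : ℤ) (x : ℚ_[p]ˣ) :
    twist q w x = x * q ^ (-(w * (x : ℚ_[p]).valuation)) := rfl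

theorem twist_self (q : ℚ_[p]ˣ) (w : ℤ) :
    twist q w q = q ^ (1 - w * (q : ℚ_[p]).valuation) := by
  rw [twist_apply, sub_eq_add_neg, zpow_add, zpow_one]

theorem valuation_twist (q : ℚ_[p]ˣ) (w : ℤ) (x : ℚ_[p]ˣ) :
    ((twist q w x : ℚ_[p]ˣ) : ℚ_[p]).valuation =
      (x : ℚ_[p]).valuation * (1 - w * (q : ℚ_[p]).valuation) := by
  rw [twist_apply, valuation_units_mul, valuation_units_zpow]
  ring

theorem twist_mul_zpow (q : ℚ_[p]ˣ) (w : ℤ) (x : ℚ_[p]ˣ) :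
    twist q w x * q ^ (w * (x : ℚ_[p]).valuation) = x := by
  rw [twist_apply, mul_assoc, ← zpow_add, neg_add_cancel, zpow_zero, mul_one]

theorem twist_of_valuation_eq_zero (q : ℚ_[p]ˣ) (w : ℤ) {x : ℚ_[p]ˣ}
    (hx : (x : ℚ_[p]).valuation = 0) : twist q w x = x := by
  rw [twist_apply, hx, mul_zero, neg_zero, zpow_zero, mul_one]

noncomputable def twistedReduction (k : ℕ) (q : ℚ_[p]ˣ) (w : ℤ) :
    ℚ_[p]ˣ →* (ZMod (p ^ k))ˣ :=
  (Units.map (PadicInt.toZModPow k).toMonoidHom).comp (unitPart.comp (twist q w))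

theorem coe_twistedReduction_of_eq_coe {k : ℕ} {q : ℚ_[p]ˣ} {w : ℤ} {x : ℚ_[p]ˣ}
    {z : ℤ_[p]} (hx : (x : ℚ_[p]).valuation = 0) (hxz : (x : ℚ_[p]) = z) :
    (twistedReduction k q w x : ZMod (p ^ k)) = PadicInt.toZModPow k z := by
  have : (unitPart (twist q w x) : ℤ_[p]) = z := PadicInt.ext <| by
    rw [twist_of_valuation_eq_zero q w hx, coe_unitPart, hx, neg_zero, zpow_zero, mul_one, hxz]
  simp [twistedReduction, this]

theorem twistedReduction_surjective (k : ℕ) (q : ℚ_[p]ˣ) (w : ℤ) :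
    Function.Surjective (twistedReduction k q w) := by
  intro y
  obtain ⟨z, rfl⟩ := PadicInt.unitsMap_toZModPow_surjective k y
  refine ⟨Units.map PadicInt.Coe.ringHom.toMonoidHom z, Units.ext ?_⟩
  exact coe_twistedReduction_of_eq_coe (valuation_coe_units z) rfl

theorem twistedReduction_neg_one (k : ℕ) (q : ℚ_[p]ˣ) (w : ℤ) :
    twistedReduction k q w (-1) = -1 := by
  ext
  rw [coe_twistedReduction_of_eq_coe (z := -1)
    (by simpa [padicValInt] using valuation_intCast (p := p) (-1)) (by simp)]
  simp

theorem twistedReduction_of_eq_five {n : ℕ} {q : ℚ_[2]ˣ} {w : ℤ} {x : ℚ_[2]ˣ}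
    (hx : (x : ℚ_[2]) = 5) : twistedReduction (n + 2) q w x = ZMod.unitFive n := by
  ext
  rw [coe_twistedReduction_of_eq_coe (z := 5) (by simp [hx])
    (by rw [hx]; exact (PadicInt.coe_natCast 5).symm), map_ofNat, ZMod.coe_unitFive]

theorem exists_pow_two_pow_eq_of_toZModPow_unitPart_eq_one {n : ℕ} {x : ℚ_[2]ˣ}
    (hv : (2 ^ n : ℤ) ∣ (x : ℚ_[2]).valuation)
    (hx : PadicInt.toZModPow (n + 2) (unitPart x : ℤ_[2]) = 1) :
    ∃ y : ℚ_[2]ˣ, y ^ 2 ^ n = x := by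
  obtain ⟨c, hc⟩ := PadicInt.exists_pow_two_pow_eq_of_toZModPow_eq_one hx
  obtain ⟨m, hm⟩ := hv
  refine ⟨Units.mk0 2 two_ne_zero ^ m * Units.map PadicInt.Coe.ringHom.toMonoidHom c,
    Units.ext ?_⟩
  rw [eq_pow_valuation_mul_unitPart x, hm, ← hc]
  simp only [Units.val_mul, Units.val_zpow_eq_zpow_val, Units.val_pow_eq_pow_val,
    Units.coe_map, Units.val_mk0, PadicInt.coe_pow]
  rw [mul_pow, ← zpow_natCast (_ ^ m), ← zpow_mul, mul_comm m]
  push_cast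
  rfl

theorem closure_le_ker_twistedReduction {n : ℕ} (hn : 1 ≤ n) {q : ℚ_[2]ˣ} {w : ℤ}
    (hw : (2 ^ n : ℤ) ∣ 1 - w * (q : ℚ_[2]).valuation) :
    Subgroup.closure ((Set.range fun x : ℚ_[2]ˣ => x ^ 2 ^ n) ∪ {q}) ≤
      (twistedReduction (n + 2) q w).ker := by
  rw [Subgroup.closure_le]
  rintro _ (⟨x, rfl⟩ | hx)
  · exact (map_pow _ x _).trans (ZMod.pow_two_pow_eq_one_of_units hn _)
  · obtain ⟨j, hj⟩ := hw
    have hq : twist q w q = (q ^ j) ^ 2 ^ n := by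
      rw [twist_self, hj, ← zpow_natCast, ← zpow_mul, mul_comm]
      push_cast
      rfl
    rw [Set.mem_singleton_iff.mp hx, SetLike.mem_coe, MonoidHom.mem_ker]
    simp only [twistedReduction, MonoidHom.comp_apply, hq, map_pow]
    exact ZMod.pow_two_pow_eq_one_of_units hn _

theorem ker_twistedReduction_le_closure {n : ℕ} {q : ℚ_[2]ˣ} {w : ℤ}
    (hw : (2 ^ n : ℤ) ∣ 1 - w * (q : ℚ_[2]).valuation) :
    (twistedReduction (n + 2) q w).ker ≤
      Subgroup.closure ((Set.range fun x : ℚ_[2]ˣ => x ^ 2 ^ n) ∪ {q}) := by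
  intro x hx
  obtain ⟨y, hy⟩ := exists_pow_two_pow_eq_of_toZModPow_unitPart_eq_one
    (by rw [valuation_twist]; exact hw.mul_left _) (congrArg Units.val hx)
  rw [← twist_mul_zpow q w x, ← hy]
  exact mul_mem (Subgroup.subset_closure (.inl ⟨y, rfl⟩))
    (zpow_mem (Subgroup.subset_closure (.inr rfl)) _)

end Padic

theorem two_adic_units_quotient_general (n : ℕ) (hn : 1 ≤ n)
    (q : ℚ_[2]ˣ) (hq2 : Odd ((q : ℚ_[2]).valuation))
    (u : ℚ_[2]ˣ) (hu : (u : ℚ_[2]) = 5) :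
    Nonempty ((ℚ_[2]ˣ ⧸ Subgroup.closure
        ((Set.range fun x : ℚ_[2]ˣ => x ^ 2 ^ n) ∪ {q})) ≃*
      Multiplicative (ZMod 2) × Multiplicative (ZMod (2 ^ n))) ∧
    Subgroup.closure
        {(QuotientGroup.mk (-1) : ℚ_[2]ˣ ⧸ Subgroup.closure
            ((Set.range fun x : ℚ_[2]ˣ => x ^ 2 ^ n) ∪ {q})),
          QuotientGroup.mk u} = ⊤ := by
  obtain ⟨w, t, hwt⟩ := (Int.isCoprime_two_right.mpr hq2).pow_right (n := n)
  have hw : (2 ^ n : ℤ) ∣ 1 - w * (q : ℚ_[2]).valuation := ⟨t, by linarith⟩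
  have hker := le_antisymm (Padic.ker_twistedReduction_le_closure hw)
    (Padic.closure_le_ker_twistedReduction hn hw)
  let e := (QuotientGroup.quotientMulEquivOfEq hker.symm).trans
    (QuotientGroup.quotientKerEquivOfSurjective _ (Padic.twistedReduction_surjective (n + 2) q w))
  refine ⟨⟨e.trans (ZMod.unitsTwoPowEquiv n).symm⟩, ?_⟩
  have he : ∀ x : ℚ_[2]ˣ, e x = Padic.twistedReduction (n + 2) q w x := fun _ ↦ rfl
  apply Subgroup.map_injective (f := e.toMonoidHom) e.injective
  rw [MonoidHom.map_closure, Set.image_pair, MulEquiv.coe_toMonoidHom, he, he,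
    Padic.twistedReduction_neg_one, Padic.twistedReduction_of_eq_five hu,
    ZMod.closure_neg_one_unitFive, Subgroup.map_top_of_surjective _ e.surjective]

/-- Let `n ≥ 1` and `q ∈ ℚ₂^×` with `ord₂(q) ≥ 1` odd. Then
`ℚ₂^× / ⟨(ℚ₂^×)^{2ⁿ}, q⟩ ≅ ℤ/2ℤ × ℤ/2ⁿℤ`, generated by the classes of `−1` and `5`. -/
theorem two_adic_units_quotient (n : ℕ) (hn : 1 ≤ n)
    (q : ℚ_[2]ˣ) (hq1 : 1 ≤ (q : ℚ_[2]).valuation) (hq2 : Odd ((q : ℚ_[2]).valuation))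
    (u : ℚ_[2]ˣ) (hu : (u : ℚ_[2]) = 5) :
    Nonempty ((ℚ_[2]ˣ ⧸ Subgroup.closure
        ((Set.range fun x : ℚ_[2]ˣ => x ^ 2 ^ n) ∪ {q})) ≃*
      Multiplicative (ZMod 2) × Multiplicative (ZMod (2 ^ n))) ∧
    Subgroup.closure
        {(QuotientGroup.mk (-1) : ℚ_[2]ˣ ⧸ Subgroup.closure
            ((Set.range fun x : ℚ_[2]ˣ => x ^ 2 ^ n) ∪ {q})),
          QuotientGroup.mk u} = ⊤ :=
  two_adic_units_quotient_general n hn q hq2 u hu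
end

section
/- Let M = ℚ₂(√5) and let q ∈ ℚ₂^× with ord₂(q) odd. Set H = {x ∈ M^× : N_{M/ℚ₂}(x) ∈ q^ℤ}. Then H = q^ℤ × U_{M,1}, where U_{M,1} is the group of units of M of norm 1. -/
/-!
In the basis `1, √5` the norm form of `ℚ₂(√5)` is `a² - 5c²`. Scaling `(a, c)` to a primitive
pair of `2`-adic integers, `a² - 5c²` is odd or `≡ 4` modulo `8`, so every norm has even
valuation (in particular `5` is not a square and `1, √5` is indeed a basis). Hence
`N(x) = q^k` with `ord₂ q` odd forces `k = 2m`, and since `N(q) = q²` the element `q^{-m} x`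
has norm one; uniqueness holds because `q` has infinite order.
-/

theorem exists_map_eq_zpow_iff_existsUnique {G H : Type*} [Group G] [Group H] (f : G →* H)
    {Q : G} {g : H} (hQ : f Q = g ^ 2) (hg : Function.Injective (g ^ · : ℤ → H))
    (heven : ∀ x (k : ℤ), f x = g ^ k → Even k) (x : G) :
    (∃ k : ℤ, f x = g ^ k) ↔ ∃! t : ℤ × G, f t.2 = 1 ∧ x = Q ^ t.1 * t.2 := by
  have hf : ∀ (k : ℤ) u, f (Q ^ k * u) = g ^ (k + k) * f u := by
    intro k u
    rw [map_mul, map_zpow, hQ, ← zpow_natCast, ← zpow_mul, Nat.cast_two, two_mul]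
  constructor
  · rintro ⟨k, hk⟩
    obtain ⟨m, rfl⟩ := heven x k hk
    refine ⟨(m, Q ^ (-m) * x), ⟨?_, by group⟩, ?_⟩
    · rw [hf, hk, ← zpow_add]
      simp
    · rintro ⟨k, u⟩ ⟨hu, rfl⟩
      rw [hf, hu, mul_one] at hk
      obtain rfl : k = m := by have := hg hk; omega
      simp only [Prod.mk.injEq, true_and]
      group
  · rintro ⟨⟨k, u⟩, ⟨hu, rfl⟩, -⟩
    exact ⟨k + k, by dsimp only at hu ⊢; rw [hf, hu, mul_one]⟩

namespace PadicInt

variable {p : ℕ} [Fact p.Prime]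

theorem valuation_eq_of_toZModPow {z : ℤ_[p]} {n : ℕ} (h₀ : toZModPow n z = 0)
    (h₁ : toZModPow (n + 1) z ≠ 0) : z ≠ 0 ∧ z.valuation = n := by
  rw [Ne, ← RingHom.mem_ker, ker_toZModPow] at h₁
  rw [← RingHom.mem_ker, ker_toZModPow] at h₀
  have hz : z ≠ 0 := by rintro rfl; exact h₁ (Ideal.zero_mem _)
  rw [mem_span_pow_iff_le_valuation z hz] at h₀ h₁
  exact ⟨hz, by omega⟩

theorem ne_zero_and_even_valuation_of_toZModPow_three {z : ℤ_[2]}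
    (h : toZModPow 1 z ≠ 0 ∨ toZModPow 3 z = 4) : z ≠ 0 ∧ Even z.valuation := by
  rcases h with h | h
  · obtain ⟨hz, hv⟩ :=
      valuation_eq_of_toZModPow (n := 0) (Subsingleton.elim (α := ZMod 1) _ _) h
    exact ⟨hz, by rw [hv]; decide⟩
  · have h₀ : toZModPow 2 z = 0 := by
      rw [← cast_toZModPow 2 3 (by norm_num), h]
      decide
    obtain ⟨hz, hv⟩ := valuation_eq_of_toZModPow h₀ (by rw [h]; decide)
    exact ⟨hz, by rw [hv]; decide⟩

theorem ne_zero_and_even_valuation_sq_sub_five_mul_sq {x y : ℤ_[2]}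
    (h : toZModPow 1 x ≠ 0 ∨ toZModPow 1 y ≠ 0) :
    x ^ 2 - 5 * y ^ 2 ≠ 0 ∧ Even (x ^ 2 - 5 * y ^ 2).valuation := by
  apply ne_zero_and_even_valuation_of_toZModPow_three
  simp only [← cast_toZModPow 1 3 (by norm_num) x, ← cast_toZModPow 1 3 (by norm_num) y,
    ← cast_toZModPow 1 3 (by norm_num) (x ^ 2 - 5 * y ^ 2), map_sub, map_mul, map_pow,
    map_ofNat] at h ⊢
  generalize toZModPow 3 x = r, toZModPow 3 y = t at h ⊢
  revert r t
  decide

end PadicInt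

namespace Padic

theorem ne_zero_and_even_valuation_sq_mul {p : ℕ} [Fact p.Prime] {a w : ℚ_[p]} (ha : a ≠ 0)
    (hw : w ≠ 0 ∧ Even w.valuation) : a ^ 2 * w ≠ 0 ∧ Even (a ^ 2 * w).valuation := by
  refine ⟨mul_ne_zero (pow_ne_zero 2 ha) hw.1, ?_⟩
  rw [valuation_mul (pow_ne_zero 2 ha) hw.1, valuation_pow]
  exact (even_two.mul_right _).add hw.2

theorem ne_zero_and_even_valuation_sq_sub_five_mul_sq {a c : ℚ_[2]} (h : a ≠ 0 ∨ c ≠ 0) :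
    a ^ 2 - 5 * c ^ 2 ≠ 0 ∧ Even (a ^ 2 - 5 * c ^ 2).valuation := by
  have primitive : ∀ x y : ℤ_[2], (x = 1 ∨ y = 1) →
      (x : ℚ_[2]) ^ 2 - 5 * (y : ℚ_[2]) ^ 2 ≠ 0 ∧
        Even ((x : ℚ_[2]) ^ 2 - 5 * (y : ℚ_[2]) ^ 2).valuation := by
    intro x y hxy
    obtain ⟨hne, hev⟩ := PadicInt.ne_zero_and_even_valuation_sq_sub_five_mul_sq (x := x) (y := y)
      (by rcases hxy with rfl | rfl <;> simp)
    have hcoe : ((x ^ 2 - 5 * y ^ 2 : ℤ_[2]) : ℚ_[2]) =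
        (x : ℚ_[2]) ^ 2 - 5 * (y : ℚ_[2]) ^ 2 := by
      push_cast; rfl
    rw [← hcoe, PadicInt.valuation_coe, Int.even_coe_nat]
    exact ⟨PadicInt.coe_ne_zero.2 hne, hev⟩
  rcases le_or_gt ‖c‖ ‖a‖ with hca | hac
  · have ha : a ≠ 0 := by rintro rfl; simp_all
    have ht : ‖c / a‖ ≤ 1 := by rw [norm_div]; exact div_le_one_of_le₀ hca (norm_nonneg a)
    have hfac : a ^ 2 - 5 * c ^ 2 = a ^ 2 * (1 ^ 2 - 5 * (c / a) ^ 2) := by field_simp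
    rw [hfac]
    exact ne_zero_and_even_valuation_sq_mul ha (primitive 1 ⟨c / a, ht⟩ (Or.inl rfl))
  · have hc : c ≠ 0 := norm_pos_iff.1 ((norm_nonneg a).trans_lt hac)
    have ht : ‖a / c‖ ≤ 1 := by rw [norm_div]; exact div_le_one_of_le₀ hac.le (norm_nonneg c)
    have hfac : a ^ 2 - 5 * c ^ 2 = c ^ 2 * ((a / c) ^ 2 - 5 * 1 ^ 2) := by field_simp
    rw [hfac]
    exact ne_zero_and_even_valuation_sq_mul hc (primitive ⟨a / c, ht⟩ 1 (Or.inr rfl))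

theorem sq_ne_five (r : ℚ_[2]) : r ^ 2 ≠ 5 := by
  simpa [sub_eq_zero] using
    (ne_zero_and_even_valuation_sq_sub_five_mul_sq (a := r) (c := 1) (Or.inr one_ne_zero)).1

theorem zpow_injective_of_valuation_ne_zero {p : ℕ} [Fact p.Prime] {q : ℚ_[p]ˣ}
    (hq : (q : ℚ_[p]).valuation ≠ 0) : Function.Injective (q ^ · : ℤ → ℚ_[p]ˣ) := by
  intro m n h
  have := congrArg (fun u : ℚ_[p]ˣ => (u : ℚ_[p]).valuation) h
  simp only [Units.val_zpow_eq_zpow_val, valuation_zpow] at this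
  exact mul_right_cancel₀ hq this

end Padic

section QuadraticExtension

variable {K L : Type*} [Field K] [CommRing L] [Algebra K L] {d : K} {s : L}

theorem linearIndependent_one_sqrt [Nontrivial L] (hs : s ^ 2 = algebraMap K L d)
    (hd : ∀ r : K, r ^ 2 ≠ d) : LinearIndependent K ![(1 : L), s] := by
  rw [LinearIndependent.pair_iff]
  intro t u htu
  by_cases hu : u = 0
  · subst hu
    simp only [zero_smul, add_zero, smul_eq_zero, one_ne_zero, or_false] at htu
    exact ⟨htu, rfl⟩
  · refine absurd ?_ (hd (-t / u))
    have hs' : s = algebraMap K L (-t / u) := by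
      rw [Algebra.algebraMap_eq_smul_one, div_eq_inv_mul, mul_smul, neg_smul,
        ← eq_neg_of_add_eq_zero_right htu, inv_smul_smul₀ hu]
    apply FaithfulSMul.algebraMap_injective K L
    rw [map_pow, ← hs', hs]

noncomputable def sqrtBasis (hrank : Module.finrank K L = 2)
    (hs : s ^ 2 = algebraMap K L d) (hd : ∀ r : K, r ^ 2 ≠ d) : Module.Basis (Fin 2) K L :=
  haveI : Nontrivial L := Module.nontrivial_of_finrank_eq_succ hrank
  haveI : FiniteDimensional K L := Module.finite_of_finrank_eq_succ hrank
  basisOfLinearIndependentOfCardEqFinrank (linearIndependent_one_sqrt hs hd) (by simp [hrank])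

theorem sqrtBasis_apply (hrank : Module.finrank K L = 2)
    (hs : s ^ 2 = algebraMap K L d) (hd : ∀ r : K, r ^ 2 ≠ d) (i : Fin 2) :
    sqrtBasis hrank hs hd i = ![1, s] i := by
  simp [sqrtBasis]

theorem exists_eq_algebraMap_add_smul_sqrt (hrank : Module.finrank K L = 2)
    (hs : s ^ 2 = algebraMap K L d) (hd : ∀ r : K, r ^ 2 ≠ d) (x : L) :
    ∃ a c : K, x = algebraMap K L a + c • s := by
  have h := (sqrtBasis hrank hs hd).sum_repr x
  rw [Fin.sum_univ_two, sqrtBasis_apply, sqrtBasis_apply] at h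
  exact ⟨_, _, by simpa [Algebra.algebraMap_eq_smul_one] using h.symm⟩

theorem sqrtBasis_repr (hrank : Module.finrank K L = 2)
    (hs : s ^ 2 = algebraMap K L d) (hd : ∀ r : K, r ^ 2 ≠ d) (a c : K) :
    ⇑((sqrtBasis hrank hs hd).repr (algebraMap K L a + c • s)) = ![a, c] := by
  rw [← (sqrtBasis hrank hs hd).repr_sum_self ![a, c], Fin.sum_univ_two, sqrtBasis_apply,
    sqrtBasis_apply]
  simp [Algebra.algebraMap_eq_smul_one]

theorem leftMulMatrix_sqrtBasis (hrank : Module.finrank K L = 2)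
    (hs : s ^ 2 = algebraMap K L d) (hd : ∀ r : K, r ^ 2 ≠ d) (a c : K) :
    Algebra.leftMulMatrix (sqrtBasis hrank hs hd) (algebraMap K L a + c • s) =
      !![a, d * c; c, a] := by
  have hmul : (algebraMap K L a + c • s) * s = algebraMap K L (d * c) + a • s := by
    rw [add_mul, smul_mul_assoc, ← sq, hs, Algebra.smul_def, Algebra.smul_def, map_mul]
    ring
  ext i j
  rw [Algebra.leftMulMatrix_eq_repr_mul, sqrtBasis_apply]
  fin_cases j <;>
    simp only [Fin.zero_eta, Fin.mk_one, Matrix.cons_val_zero, Matrix.cons_val_one, mul_one, hmul,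
      sqrtBasis_repr] <;>
    fin_cases i <;> rfl

theorem norm_algebraMap_add_smul_sqrt (hrank : Module.finrank K L = 2)
    (hs : s ^ 2 = algebraMap K L d) (hd : ∀ r : K, r ^ 2 ≠ d) (a c : K) :
    Algebra.norm K (algebraMap K L a + c • s) = a ^ 2 - d * c ^ 2 := by
  rw [Algebra.norm_eq_matrix_det (sqrtBasis hrank hs hd), leftMulMatrix_sqrtBasis,
    Matrix.det_fin_two_of]
  ring

end QuadraticExtension

theorem even_valuation_norm_of_sq_eq_five {M : Type*} [CommRing M] [Algebra ℚ_[2] M]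
    (hrank : Module.finrank ℚ_[2] M = 2) {s : M} (hs : s ^ 2 = 5) {x : M} (hx : x ≠ 0) :
    Even (Algebra.norm ℚ_[2] x).valuation := by
  have hs' : s ^ 2 = algebraMap ℚ_[2] M 5 := by rw [hs, map_ofNat]
  obtain ⟨a, c, rfl⟩ := exists_eq_algebraMap_add_smul_sqrt hrank hs' Padic.sq_ne_five x
  rw [norm_algebraMap_add_smul_sqrt hrank hs' Padic.sq_ne_five]
  refine (Padic.ne_zero_and_even_valuation_sq_sub_five_mul_sq ?_).2
  by_contra! h
  simp [h.1, h.2] at hx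

theorem H_eq_qpow_times_norm_one_general (M : Type) [NormedField M] [NormedAlgebra ℚ_[2] M]
    (hrank : Module.finrank ℚ_[2] M = 2)
    (s : M) (hs : s ^ 2 = 5)
    (q : ℚ_[2]ˣ) (hq : Odd ((q : ℚ_[2]).valuation)) :
    ∀ x : Mˣ,
      (∃ k : ℤ, Algebra.norm ℚ_[2] ((x : M)) = (q : ℚ_[2]) ^ k) ↔
      (∃! t : ℤ × Mˣ, Algebra.norm ℚ_[2] ((t.2 : M)) = 1 ∧
        x = (Units.map (algebraMap ℚ_[2] M).toMonoidHom q) ^ t.1 * t.2) := by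
  intro x
  have hQ : Units.map (Algebra.norm ℚ_[2] : M →* ℚ_[2])
      (Units.map (algebraMap ℚ_[2] M).toMonoidHom q) = q ^ 2 := by
    ext
    simp [Algebra.norm_algebraMap, hrank]
  have heven : ∀ (y : Mˣ) (k : ℤ), Units.map (Algebra.norm ℚ_[2] : M →* ℚ_[2]) y = q ^ k →
      Even k := by
    intro y k hk
    have hv := congrArg (fun u : ℚ_[2]ˣ => (u : ℚ_[2]).valuation) hk
    simp only [Units.coe_map, Units.val_zpow_eq_zpow_val, Padic.valuation_zpow] at hv
    have hy := even_valuation_norm_of_sq_eq_five hrank hs y.ne_zero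
    rw [hv] at hy
    exact (Int.even_mul.1 hy).resolve_right (Int.not_even_iff_odd.2 hq)
  have hinj := Padic.zpow_injective_of_valuation_ne_zero (q := q) (by rintro h; simp [h] at hq)
  simpa [Units.ext_iff] using exists_map_eq_zpow_iff_existsUnique _ hQ hinj heven x

/-- Let `M = ℚ₂(√5)` and `q ∈ ℚ₂^×` with `ord₂(q)` odd.  Setting
`H = {x ∈ M^× : N_{M/ℚ₂}(x) ∈ q^ℤ}`, one has `H = q^ℤ × U_{M,1}`: an element `x ∈ M^×` has
norm in `q^ℤ` iff it can be written uniquely as `x = q^k·u` with `k ∈ ℤ` and `u` a norm-one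
unit. -/
theorem H_eq_qpow_times_norm_one (M : Type) [NormedField M] [NormedAlgebra ℚ_[2] M]
    [CompleteSpace M] (hrank : Module.finrank ℚ_[2] M = 2)
    (hisom : ∀ x : ℚ_[2], ‖algebraMap ℚ_[2] M x‖ = ‖x‖)
    (hunram : ∀ x : M, x ≠ 0 → ∃ k : ℤ, ‖x‖ = (2 : ℝ) ^ k)
    (s : M) (hs : s ^ 2 = 5)
    (q : ℚ_[2]ˣ) (hq : Odd ((q : ℚ_[2]).valuation)) :
    ∀ x : Mˣ,
      (∃ k : ℤ, Algebra.norm ℚ_[2] ((x : M)) = (q : ℚ_[2]) ^ k) ↔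
      (∃! t : ℤ × Mˣ, Algebra.norm ℚ_[2] ((t.2 : M)) = 1 ∧
        x = (Units.map (algebraMap ℚ_[2] M).toMonoidHom q) ^ t.1 * t.2) :=
  H_eq_qpow_times_norm_one_general M hrank s hs q hq
end

section
/- Let G be a group, M a G-module, and α an element of the center of G. Then every element of H¹(G, M) is annihilated by the endomorphism x ↦ α·x − x of M; in particular, if x ↦ α·x − x is an automorphism of M, then H¹(G, M) = 0. -/
/-! Evaluating the cocycle identity at `α * g = g * α` in the two possible orders gives
`α • f g - f g = g • f α - f α`, so `α - 1` sends the class of `f` to the coboundary of `f α`.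
Since `α` is central, `α - 1` commutes with the action of `G`; hence if it is bijective,
writing `f α = (α - 1) n` shows that `(α - 1) f` is also the coboundary of `(α - 1) n`,
and injectivity of `α - 1` makes `f` the coboundary of `n`. -/

open Function

variable {G M : Type*}

theorem cocycle_smul_sub_self_eq_of_commute [Mul G] [AddCommGroup M] [SMul G M] {f : G → M}
    (hf : ∀ g h : G, f (g * h) = f g + g • f h) {α g : G} (hαg : Commute α g) :
    α • f g - f g = g • f α - f α := by
  have h := hf α g
  rw [hαg.eq, hf g α] at h
  rw [sub_eq_sub_iff_add_eq_add, add_comm, add_comm (g • f α)]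
  exact h.symm

theorem smul_smul_sub_smul_of_commute [Monoid G] [AddCommGroup M] [DistribMulAction G M]
    {α g : G} (hαg : Commute α g) (x : M) :
    α • (g • x) - g • x = g • (α • x - x) := by
  rw [smul_sub, smul_smul, smul_smul, hαg.eq]

theorem cocycle_eq_coboundary_of_injective [Monoid G] [AddCommGroup M] [DistribMulAction G M]
    {α : G} (hα : ∀ g : G, Commute α g) (hinj : Injective fun x : M => α • x - x)
    {f : G → M} (hf : ∀ g h : G, f (g * h) = f g + g • f h) {n : M} (hn : α • n - n = f α)
    (g : G) : f g = g • n - n := by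
  apply hinj
  calc α • f g - f g = g • f α - f α := cocycle_smul_sub_self_eq_of_commute hf (hα g)
    _ = g • (α • n - n) - (α • n - n) := by rw [hn]
    _ = (α • (g • n) - g • n) - (α • n - n) := by rw [smul_smul_sub_smul_of_commute (hα g)]
    _ = α • (g • n - n) - (g • n - n) := by rw [smul_sub]; abel

/-- (Lang, Thm 5.1) Let `G` be a group, `M` a `G`-module and `α` a central element of `G`.
Then every element of `H¹(G, M)` is annihilated by `x ↦ α·x − x`: for every 1-cocycle
`f : G → M`, the cocycle `g ↦ α·f(g) − f(g)` is a coboundary.  In particular, if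
`x ↦ α·x − x` is an automorphism of `M`, then `H¹(G, M) = 0`, i.e. every 1-cocycle is a
coboundary. -/
theorem central_element_annihilates_H1 (G : Type) [Group G] (M : Type) [AddCommGroup M]
    [DistribMulAction G M] (α : G) (hα : ∀ g : G, α * g = g * α) :
    (∀ f : G → M, (∀ g h : G, f (g * h) = f g + g • f h) →
      ∃ m : M, ∀ g : G, α • f g - f g = g • m - m) ∧
    (Function.Bijective (fun x : M => α • x - x) →
      ∀ f : G → M, (∀ g h : G, f (g * h) = f g + g • f h) →
        ∃ m : M, ∀ g : G, f g = g • m - m) := by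
  refine ⟨fun f hf => ⟨f α, fun g => cocycle_smul_sub_self_eq_of_commute hf (hα g)⟩,
    fun hbij f hf => ?_⟩
  obtain ⟨n, hn⟩ := hbij.surjective (f α)
  exact ⟨n, cocycle_eq_coboundary_of_injective hα hbij.injective hf hn⟩
end
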